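/- Iterated integrals of continuously differentiable paths satisfy the shuffle relations: for any two words u, v over the alphabet, J_u(t₀+h;t₀)·J_v(t₀+h;t₀) = (J, u ⧢ v), i.e. the product of the iterated integrals over u and v equals the sum of the iterated integrals over all words in the shuffle u ⧢ v. -/

import Mathlib

noncomputable def shuffle {A : Type*} : List A → List A → (List A →₀ ℝ)
  | [], v => Finsupp.single v 1
  | u@(_ :: _), [] => Finsupp.single u 1
  | a :: u, b :: v =>
      Finsupp.mapDomain (a :: ·) (shuffle u (b :: v)) +
      Finsupp.mapDomain (b :: ·) (shuffle (a :: u) v)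
  termination_by u v => u.length + v.length
  decreasing_by all_goals (simp; try omega)

lemma shuffle_nil_left {A : Type*} (v : List A) : shuffle [] v = Finsupp.single v 1 := by
  rw [shuffle]

lemma shuffle_nil_right {A : Type*} (u : List A) : shuffle u [] = Finsupp.single u 1 := by
  cases u <;> rw [shuffle]

lemma shuffle_cons {A : Type*} (a b : A) (u v : List A) :
    shuffle (a :: u) (b :: v) =
      Finsupp.mapDomain (a :: ·) (shuffle u (b :: v)) +
      Finsupp.mapDomain (b :: ·) (shuffle (a :: u) v) := by
  rw [shuffle]

lemma mapDomain_swap {A : Type*} (c a : A) (x : List A →₀ ℝ) :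
    Finsupp.mapDomain (c :: ·) (Finsupp.mapDomain (· ++ [a]) x) =
      Finsupp.mapDomain (· ++ [a]) (Finsupp.mapDomain (c :: ·) x) := by
  rw [← Finsupp.mapDomain_comp, ← Finsupp.mapDomain_comp]
  have h : ((c :: ·) ∘ (· ++ [a]) : List A → List A) = (· ++ [a]) ∘ (c :: ·) := by
    funext l; simp [Function.comp]
  rw [h]

theorem shuffle_concat {A : Type*} (a b : A) :
    ∀ u v : List A, shuffle (u ++ [a]) (v ++ [b]) =
      Finsupp.mapDomain (· ++ [a]) (shuffle u (v ++ [b])) +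
      Finsupp.mapDomain (· ++ [b]) (shuffle (u ++ [a]) v)
  | [], [] => by
      rw [List.nil_append, List.nil_append, shuffle_cons a b [] []]
      simp only [shuffle_nil_left, shuffle_nil_right, Finsupp.mapDomain_single,
        List.cons_append, List.nil_append]
      abel
  | [], d :: v' => by
      have ih := shuffle_concat a b [] v'
      simp only [List.nil_append, List.cons_append] at ih ⊢
      rw [shuffle_cons a d [] (v' ++ [b]), ih, shuffle_cons a d [] v']
      simp only [shuffle_nil_left, Finsupp.mapDomain_add, Finsupp.mapDomain_single,
        mapDomain_swap, List.cons_append, List.nil_append, List.append_assoc]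
      abel
  | c :: u', [] => by
      have ih := shuffle_concat a b u' []
      simp only [List.append_nil, List.nil_append, List.cons_append] at ih ⊢
      rw [shuffle_cons c b (u' ++ [a]) [], ih, shuffle_cons c b u' []]
      simp only [shuffle_nil_left, shuffle_nil_right, Finsupp.mapDomain_add,
        Finsupp.mapDomain_single, mapDomain_swap, List.cons_append, List.nil_append,
        List.append_assoc]
      abel
  | c :: u', d :: v' => by
      have ih1 := shuffle_concat a b u' (d :: v')
      have ih2 := shuffle_concat a b (c :: u') v'
      simp only [List.cons_append] at ih1 ih2 ⊢
      rw [shuffle_cons c d (u' ++ [a]) (v' ++ [b]), ih1, ih2,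
        shuffle_cons c d u' (v' ++ [b]), shuffle_cons c d (u' ++ [a]) v']
      simp only [Finsupp.mapDomain_add, mapDomain_swap]
      abel
  termination_by u v => u.length + v.length
  decreasing_by all_goals (simp; try omega)

/-- Auxiliary recursion for iterated integrals: the head of the list is the
letter integrated outermost.  `Jrev B' (ℓ :: w) s t = ∫_s^t Jrev B' w s r · B'_ℓ(r) dr`. -/
noncomputable def Jrev {A : Type*} (B' : A → ℝ → ℝ) : List A → ℝ → ℝ → ℝ
  | [], _, _ => 1
  | ℓ :: w, s, t => ∫ r in s..t, Jrev B' w s r * B' ℓ r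

/-- The iterated integral `J_w(t; s)` of a word `w = ℓ₁…ℓₙ` (list in reading
order) against the differentiable driving paths with derivatives `B'_ℓ`:
`J_∅ = 1` and `J_{wℓ}(t;s) = ∫_s^t J_w(r;s) B'_ℓ(r) dr` (the last letter is
integrated outermost, as in the paper's recursion). -/
noncomputable def Jit {A : Type*} (B' : A → ℝ → ℝ) (w : List A) (s t : ℝ) : ℝ :=
  Jrev B' w.reverse s t

section analytic
variable {A : Type*} {B' : A → ℝ → ℝ} (hB' : ∀ ℓ, Continuous (B' ℓ)) (s : ℝ)

lemma Jit_nil (t : ℝ) : Jit B' [] s t = 1 := rfl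

lemma Jit_concat (w : List A) (ℓ : A) (t : ℝ) :
    Jit B' (w ++ [ℓ]) s t = ∫ r in s..t, Jit B' w s r * B' ℓ r := by
  simp only [Jit, List.reverse_append, List.reverse_singleton, List.singleton_append, Jrev]

include hB' in
lemma Jit_continuous (w : List A) : Continuous (fun t => Jit B' w s t) := by
  induction w using List.reverseRecOn with
  | nil => simpa [Jit_nil] using continuous_const
  | append_singleton w ℓ ihw =>
    have hc : Continuous fun r => Jit B' w s r * B' ℓ r := ihw.mul (hB' ℓ)
    have := intervalIntegral.continuous_primitive
      (fun a b => (hc.intervalIntegrable (μ := MeasureTheory.volume) a b)) s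
    simpa [Jit_concat] using this

include hB' in
lemma Jit_hasDerivAt (w : List A) (ℓ : A) (t : ℝ) :
    HasDerivAt (fun t => Jit B' (w ++ [ℓ]) s t) (Jit B' w s t * B' ℓ t) t := by
  have hc : Continuous fun r => Jit B' w s r * B' ℓ r := (Jit_continuous hB' s w).mul (hB' ℓ)
  have := intervalIntegral.integral_hasDerivAt_right (f := fun r => Jit B' w s r * B' ℓ r)
    (hc.intervalIntegrable s t)
    hc.stronglyMeasurable.stronglyMeasurableAtFilter
    hc.continuousAt
  simp only [Jit_concat]
  exact this

lemma Jit_self (w : List A) (ℓ : A) : Jit B' (w ++ [ℓ]) s s = 0 := by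
  simp [Jit_concat]

end analytic

theorem key {A : Type*} {B' : A → ℝ → ℝ} (hB' : ∀ ℓ, Continuous (B' ℓ)) (s : ℝ) :
    ∀ (n : ℕ) (u v : List A), u.length + v.length ≤ n → ∀ t : ℝ,
      Jit B' u s t * Jit B' v s t = (shuffle u v).sum fun w c => c * Jit B' w s t := by
  intro n
  induction n with
  | zero =>
    intro u v hlen t
    have hu : u = [] := by
      cases u with | nil => rfl | cons _ _ => simp at hlen
    have hv : v = [] := by
      cases v with | nil => rfl | cons _ _ => simp at hlen
    subst hu; subst hv
    simp [shuffle_nil_left, Jit_nil, Finsupp.sum_single_index]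
  | succ n ih =>
    intro u v hlen t
    rcases u.eq_nil_or_concat with rfl | ⟨u', a, rfl⟩
    · simp [shuffle_nil_left, Jit_nil, Finsupp.sum_single_index]
    rcases v.eq_nil_or_concat with rfl | ⟨v', b, rfl⟩
    · simp [shuffle_nil_right, Jit_nil, Finsupp.sum_single_index]
    simp only [List.concat_eq_append] at *
    have hu' : u'.length + (v' ++ [b]).length ≤ n := by
      simp only [List.length_append, List.length_singleton] at hlen ⊢; omega
    have hv' : (u' ++ [a]).length + v'.length ≤ n := by
      simp only [List.length_append, List.length_singleton] at hlen ⊢; omega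
    set S1 := shuffle u' (v' ++ [b]) with hS1
    set S2 := shuffle (u' ++ [a]) v' with hS2
    set F : ℝ → ℝ := fun t => Jit B' (u' ++ [a]) s t * Jit B' (v' ++ [b]) s t -
      ((∑ w ∈ S1.support, S1 w * Jit B' (w ++ [a]) s t) +
       (∑ w ∈ S2.support, S2 w * Jit B' (w ++ [b]) s t)) with hF
    have hderiv : ∀ x : ℝ, HasDerivAt F 0 x := by
      intro x
      have h1 := Jit_hasDerivAt hB' s u' a x
      have h2 := Jit_hasDerivAt hB' s v' b x
      have hmul := h1.fun_mul h2
      have hs1 : HasDerivAt (fun t => ∑ w ∈ S1.support, S1 w * Jit B' (w ++ [a]) s t)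
          (∑ w ∈ S1.support, S1 w * (Jit B' w s x * B' a x)) x :=
        HasDerivAt.fun_sum fun w _ => (Jit_hasDerivAt hB' s w a x).const_mul (S1 w)
      have hs2 : HasDerivAt (fun t => ∑ w ∈ S2.support, S2 w * Jit B' (w ++ [b]) s t)
          (∑ w ∈ S2.support, S2 w * (Jit B' w s x * B' b x)) x :=
        HasDerivAt.fun_sum fun w _ => (Jit_hasDerivAt hB' s w b x).const_mul (S2 w)
      have htot := hmul.fun_sub (hs1.fun_add hs2)
      have e1 : ∑ w ∈ S1.support, S1 w * Jit B' w s x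
          = Jit B' u' s x * Jit B' (v' ++ [b]) s x := (ih u' (v' ++ [b]) hu' x).symm
      have e2 : ∑ w ∈ S2.support, S2 w * Jit B' w s x
          = Jit B' (u' ++ [a]) s x * Jit B' v' s x := (ih (u' ++ [a]) v' hv' x).symm
      have ed : Jit B' u' s x * B' a x * Jit B' (v' ++ [b]) s x +
          Jit B' (u' ++ [a]) s x * (Jit B' v' s x * B' b x) -
          ((∑ w ∈ S1.support, S1 w * (Jit B' w s x * B' a x)) +
           (∑ w ∈ S2.support, S2 w * (Jit B' w s x * B' b x))) = 0 := by
        have r1 : ∑ w ∈ S1.support, S1 w * (Jit B' w s x * B' a x)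
            = (∑ w ∈ S1.support, S1 w * Jit B' w s x) * B' a x := by
          rw [Finset.sum_mul]; exact Finset.sum_congr rfl fun w _ => by ring
        have r2 : ∑ w ∈ S2.support, S2 w * (Jit B' w s x * B' b x)
            = (∑ w ∈ S2.support, S2 w * Jit B' w s x) * B' b x := by
          rw [Finset.sum_mul]; exact Finset.sum_congr rfl fun w _ => by ring
        rw [r1, r2, e1, e2]; ring
      rw [hF]
      simpa [ed] using htot
    have hFs : F s = 0 := by
      simp [hF, Jit_self]
    have hconst : F t = F s :=
      is_const_of_deriv_eq_zero (fun x => (hderiv x).differentiableAt)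
        (fun x => (hderiv x).deriv) t s
    have hmain : Jit B' (u' ++ [a]) s t * Jit B' (v' ++ [b]) s t =
        (∑ w ∈ S1.support, S1 w * Jit B' (w ++ [a]) s t) +
        (∑ w ∈ S2.support, S2 w * Jit B' (w ++ [b]) s t) := by
      have h0 := hconst.trans hFs
      simp only [hF] at h0
      linarith [h0]
    rw [hmain, shuffle_concat, Finsupp.sum_add_index' (fun w => by simp)
      (fun w c₁ c₂ => by ring),
      Finsupp.sum_mapDomain_index (fun w => by simp) (fun w c₁ c₂ => by ring),
      Finsupp.sum_mapDomain_index (fun w => by simp) (fun w c₁ c₂ => by ring)]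
    rfl

/-- iterated integrals of continuously differentiable paths satisfy
the shuffle relations: `J_u(t₀+h;t₀)·J_v(t₀+h;t₀) = (J, u ⧢ v)`. -/
theorem iterated_integrals_shuffle {A : Type*} (B' : A → ℝ → ℝ)
    (hB' : ∀ ℓ, Continuous (B' ℓ)) (t₀ h : ℝ) (hh : 0 ≤ h) (u v : List A) :
    Jit B' u t₀ (t₀ + h) * Jit B' v t₀ (t₀ + h) =
      (shuffle u v).sum fun w c => c * Jit B' w t₀ (t₀ + h) :=
  key hB' t₀ (u.length + v.length) u v le_rfl (t₀ + h)
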